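/- arXiv:1506.05847 — 3 statements merged into one kernel-verified Lean document; each statement's English description precedes it below -/
import Mathlib

section
/- Assume Hypothesis (PM). For every 0 < r₁ < r₂ < σ(s₀), there exists a function σ̃ ∈ C³([0,∞)) and constants Θ ≥ θ > 0 such that: σ̃(s) = σ(s) for 0 ≤ s ≤ s₋(r₁); σ̃(s) < σ(s) for s₋(r₁) < s < s₊(r₂); and θ ≤ σ̃'(s) ≤ Θ for all 0 ≤ s < ∞. Moreover, with such a σ̃, the function f̃ defined by f̃(s) = σ̃(√s)/√s for s > 0 and f̃(0) = f(0) belongs to C³([0,∞)) and satisfies θ ≤ f̃(s) + 2s f̃'(s) ≤ Θ for all s ≥ 0. -/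
open MeasureTheory Set Filter
open scoped NNReal ENNReal Topology

noncomputable section


abbrev Euc (n : ℕ) : Type := EuclideanSpace ℝ (Fin n)

variable {n : ℕ}

/-- real inner product on Euclidean space. -/
def rinner (x y : Euc n) : ℝ := inner ℝ x y

/-- spatial gradient of `u(x,t)` with respect to `x`. -/
def spatialGrad (u : Euc n × ℝ → ℝ) (z : Euc n × ℝ) : Euc n :=
  gradient (fun y => u (y, z.2)) z.1

/-- time derivative of `u(x,t)`. -/
def timeDeriv (u : Euc n × ℝ → ℝ) (z : Euc n × ℝ) : ℝ :=
  deriv (fun τ => u (z.1, τ)) z.2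

/-- spatial divergence of a vector field. -/
def sdiv (v : Euc n → Euc n) (x : Euc n) : ℝ :=
  ∑ i, fderiv ℝ v x (EuclideanSpace.single i 1) i

/-- the space-time cylinder `Ω × (0,T)`. -/
def cylinder (Ω : Set (Euc n)) (T : ℝ) : Set (Euc n × ℝ) := Ω ×ˢ Ioo 0 T

/-- `u` is a Lipschitz (weak) solution of `u_t = div (A (Du))` in `Ω_T`,
`A(Du)·n = 0` on `∂Ω × (0,T)`, `u = u₀` at `t = 0`. -/
def IsLipschitzSolution (Ω : Set (Euc n)) (T : ℝ) (A : Euc n → Euc n)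
    (u₀ : Euc n → ℝ) (u : Euc n × ℝ → ℝ) : Prop :=
  (∃ C : ℝ≥0, LipschitzOnWith C u (cylinder Ω T)) ∧
  ∀ ζ : Euc n × ℝ → ℝ, ContDiff ℝ (⊤ : ℕ∞) ζ → ∀ s ∈ Icc (0:ℝ) T,
    (∫ x in Ω, (u (x, s) * ζ (x, s) - u₀ x * ζ (x, 0))) =
      ∫ t in Ioo (0:ℝ) s, ∫ x in Ω,
        (u (x, t) * timeDeriv ζ (x, t) - rinner (A (spatialGrad u (x, t))) (spatialGrad ζ (x, t)))

/-- Hölder continuity with exponent `a` on a set. -/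
def HolderOn {X Y : Type*} [PseudoMetricSpace X] [PseudoMetricSpace Y]
    (a : ℝ) (f : X → Y) (s : Set X) : Prop :=
  ∃ C : ℝ, ∀ x ∈ s, ∀ y ∈ s, dist (f x) (f y) ≤ C * dist x y ^ a

/-- membership in the Hölder space `C^{2+a}(s)`. -/
def IsC2Holder (a : ℝ) (s : Set (Euc n)) (u : Euc n → ℝ) : Prop :=
  ContDiffOn ℝ 2 u s ∧ HolderOn a (iteratedFDerivWithin ℝ 2 u s) s

/-- Hölder continuity with exponent `a` in the parabolic metric. -/
def ParabolicHolderOn {Y : Type*} [PseudoMetricSpace Y] (a : ℝ)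
    (g : Euc n × ℝ → Y) (s : Set (Euc n × ℝ)) : Prop :=
  ∃ C : ℝ, ∀ z ∈ s, ∀ w ∈ s,
    dist (g z) (g w) ≤ C * (dist z.1 w.1 + |z.2 - w.2| ^ (1/2 : ℝ)) ^ a

/-- spatial Hessian of `u(x,t)`. -/
def spatialHessian (u : Euc n × ℝ → ℝ) (z : Euc n × ℝ) : Euc n →L[ℝ] Euc n :=
  fderiv ℝ (fun y => spatialGrad u (y, z.2)) z.1

/-- membership in the parabolic Hölder space `C^{2+a,1+a/2}(Q)`. -/
def IsParabolicC2 (a : ℝ) (Q : Set (Euc n × ℝ)) (u : Euc n × ℝ → ℝ) : Prop :=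
  ContinuousOn u Q ∧
  (∀ z ∈ Q, DifferentiableAt ℝ (fun y => u (y, z.2)) z.1) ∧
  (∀ z ∈ Q, DifferentiableAt ℝ (fun y => spatialGrad u (y, z.2)) z.1) ∧
  (∀ z ∈ Q, DifferentiableAt ℝ (fun τ => u (z.1, τ)) z.2) ∧
  ContinuousOn (spatialGrad u) Q ∧
  ParabolicHolderOn a (spatialHessian u) Q ∧
  ParabolicHolderOn a (timeDeriv u) Q

/-- `ρ` is a `C^{2+a}` local defining function for `∂Ω` on `U`. -/
def IsC2Defining (a : ℝ) (Ω U : Set (Euc n)) (ρ : Euc n → ℝ) : Prop :=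
  IsOpen U ∧ ContDiffOn ℝ 2 ρ U ∧ HolderOn a (iteratedFDerivWithin ℝ 2 ρ U) U ∧
  (∀ y ∈ U, gradient ρ y ≠ 0) ∧
  Ω ∩ U = {y ∈ U | ρ y < 0} ∧ frontier Ω ∩ U = {y ∈ U | ρ y = 0}

/-- `∂Ω` is of class `C^{2+a}`. -/
def HasC2Boundary (a : ℝ) (Ω : Set (Euc n)) : Prop :=
  ∀ x ∈ frontier Ω, ∃ U ρ, x ∈ U ∧ IsC2Defining a Ω U ρ

/-- A vector field `g` is tangential on `∂Ω` (i.e. `g · n = 0` on `∂Ω`). -/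
def TangentialOnBoundary (a : ℝ) (Ω : Set (Euc n)) (g : Euc n → Euc n) : Prop :=
  ∀ x ∈ frontier Ω, ∀ U ρ, x ∈ U → IsC2Defining a Ω U ρ → rinner (g x) (gradient ρ x) = 0

/-- standing assumptions of the paper. -/
structure StandingAssumptions (n : ℕ) (a T : ℝ) (Ω : Set (Euc n)) (u₀ : Euc n → ℝ) : Prop where
  hn : 1 ≤ n
  hT : 0 < T
  ha : a ∈ Ioo (0:ℝ) 1
  isOpen : IsOpen Ω
  conn : IsConnected Ω
  bounded : Bornology.IsBounded Ω
  bdry : HasC2Boundary a Ω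
  u₀reg : IsC2Holder a (closure Ω) u₀
  u₀nonconst : ¬ ∃ c : ℝ, ∀ x ∈ Ω, u₀ x = c
  u₀neumann : TangentialOnBoundary a Ω (fun x => gradient u₀ x)

/-- the profile `σ(s) = s f(s²)`. -/
def sig (f : ℝ → ℝ) (s : ℝ) : ℝ := s * f (s ^ 2)

/-- Hypothesis (PM): Perona–Malik type profile. -/
structure HypPM (f : ℝ → ℝ) (s₀ : ℝ) : Prop where
  hs₀ : 0 < s₀
  cont : ContinuousOn f (Ici 0)
  c3 : ContDiffOn ℝ 3 f (Ico 0 (s₀ ^ 2))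
  c1 : ContDiffOn ℝ 1 f (Ioi (s₀ ^ 2))
  inc : ∀ s ∈ Ico 0 s₀, 0 < derivWithin (sig f) (Ici 0) s
  dec : ∀ s ∈ Ioi s₀, derivWithin (sig f) (Ici 0) s < 0
  lim : Tendsto (sig f) atTop (nhds 0)

/-- the functions `s₋, s₊` for a Perona–Malik profile. -/
def PMroots (f : ℝ → ℝ) (s₀ : ℝ) (sm sp : ℝ → ℝ) : Prop :=
  ∀ r ∈ Ioo 0 (sig f s₀),
    sm r ∈ Ioo 0 s₀ ∧ sig f (sm r) = r ∧ sp r ∈ Ioi s₀ ∧ sig f (sp r) = r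

/-- Hypothesis (H): Höllig type profile. -/
structure HypH (a : ℝ) (f : ℝ → ℝ) (s₁ s₂ : ℝ) : Prop where
  hs₁ : 0 < s₁
  hs₁₂ : s₁ < s₂
  cont : ContinuousOn f (Ici 0)
  c1lo : ContDiffOn ℝ 1 f (Ico 0 (s₁ ^ 2))
  hollo : HolderOn a (derivWithin f (Ico 0 (s₁ ^ 2))) (Ico 0 (s₁ ^ 2))
  c1hi : ContDiffOn ℝ 1 f (Ioi (s₂ ^ 2))
  holhi : HolderOn a (derivWithin f (Ioi (s₂ ^ 2))) (Ioi (s₂ ^ 2))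
  inclo : ∀ s ∈ Ico 0 s₁, 0 < derivWithin (sig f) (Ici 0) s
  inchi : ∀ s ∈ Ioi s₂, 0 < derivWithin (sig f) (Ici 0) s
  ord : sig f s₂ < sig f s₁
  nonneg : 0 ≤ sig f s₂
  lin : ∃ lam Lam : ℝ, 0 < lam ∧ lam ≤ Lam ∧
    ∀ s, 2 * s₂ ≤ s → lam ≤ derivWithin (sig f) (Ici 0) s ∧ derivWithin (sig f) (Ici 0) s ≤ Lam

/-- the numbers `s₁*, s₂*` and functions `s₋, s₊` for a Höllig profile. -/
def Hroots (f : ℝ → ℝ) (s₁ s₂ s1s s2s : ℝ) (sm sp : ℝ → ℝ) : Prop :=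
  s1s ∈ Ico 0 s₁ ∧ sig f s1s = sig f s₂ ∧ s2s ∈ Ioi s₂ ∧ sig f s2s = sig f s₁ ∧
  ∀ r ∈ Ioo (sig f s₂) (sig f s₁),
    sm r ∈ Ioo s1s s₁ ∧ sig f (sm r) = r ∧ sp r ∈ Ioo s₂ s2s ∧ sig f (sp r) = r

/-- the equation `u_t = div(A(Du))` holds pointwise at `z`. -/
def PointwisePDE (A : Euc n → Euc n) (u : Euc n × ℝ → ℝ) (z : Euc n × ℝ) : Prop :=
  timeDeriv u z = sdiv (fun y => A (spatialGrad u (y, z.2))) z.1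

/-- `‖Du‖_{L^∞(Ω_T)} = ‖Du₀‖_{L^∞(Ω)}`. -/
def GradSupEq (Ω : Set (Euc n)) (T : ℝ) (u₀ : Euc n → ℝ) (u : Euc n × ℝ → ℝ) : Prop :=
  sSup ((fun z => ‖spatialGrad u z‖) '' cylinder Ω T) = sSup ((fun x => ‖gradient u₀ x‖) '' Ω)

/-- a classical solution of problem (P) with flux boundary condition
`A(Du)·n = 0`, of class `C^{2+a,1+a/2}(cl Ω_T)`. -/
def IsClassicalSolution (a : ℝ) (Ω : Set (Euc n)) (T : ℝ) (A : Euc n → Euc n)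
    (u₀ : Euc n → ℝ) (u : Euc n × ℝ → ℝ) : Prop :=
  IsParabolicC2 a (closure (cylinder Ω T)) u ∧
  (∀ z ∈ cylinder Ω T, PointwisePDE A u z) ∧
  (∀ x ∈ Ω, u (x, 0) = u₀ x) ∧
  ∀ t ∈ Ioo (0:ℝ) T, TangentialOnBoundary a Ω (fun x => A (spatialGrad u (x, t)))


lemma exists_eta (a ε : ℝ) (ha : 0 < a) (hε : 0 < ε) :
    ∃ η η' : ℝ → ℝ, ContDiff ℝ 3 η ∧ (∀ x, HasDerivAt η (η' x) x) ∧
      (∀ x, η' x ∈ Icc (0:ℝ) 1) ∧ (∀ s, s ≤ a → η s = s) ∧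
      (∀ s, 0 ≤ s → 0 ≤ η s) ∧ (∀ s, a < s → η s < s) ∧ (∀ s, η s ≤ a + ε) := by
  set ψ : ℝ → ℝ := fun t => Real.smoothTransition ((t - a) / ε) with hψdef
  have hψc : Continuous ψ :=
    Real.smoothTransition.continuous.comp ((continuous_id.sub continuous_const).div_const ε)
  have hψ01 : ∀ t, ψ t ∈ Icc (0:ℝ) 1 := fun t =>
    ⟨Real.smoothTransition.nonneg _, Real.smoothTransition.le_one _⟩
  have hψ0 : ∀ t, t ≤ a → ψ t = 0 := fun t ht =>
    Real.smoothTransition.zero_of_nonpos (div_nonpos_iff.2 (Or.inr ⟨by linarith, hε.le⟩))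
  have hψ1 : ∀ t, a + ε ≤ t → ψ t = 1 := fun t ht =>
    Real.smoothTransition.one_of_one_le ((le_div_iff₀ hε).2 (by linarith))
  have hψpos : ∀ t, a < t → 0 < ψ t := fun t ht =>
    Real.smoothTransition.pos_of_pos (div_pos (by linarith) hε)
  have hint : ∀ u v : ℝ, IntervalIntegrable ψ volume u v := fun u v =>
    hψc.intervalIntegrable u v
  set I : ℝ → ℝ := fun s => ∫ t in (0:ℝ)..s, ψ t with hIdef
  have hId : ∀ x, HasDerivAt I (ψ x) x := fun x =>
    intervalIntegral.integral_hasDerivAt_right (hint 0 x)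
      ⟨univ, univ_mem, hψc.aestronglyMeasurable⟩ hψc.continuousAt
  have hIzero : ∀ s, s ≤ a → I s = 0 := by
    intro s hs
    have : EqOn ψ (fun _ => (0:ℝ)) (uIcc 0 s) := by
      intro t ht
      rcases Set.mem_uIcc.1 ht with h | h
      · exact hψ0 t (le_trans h.2 hs)
      · exact hψ0 t (le_trans h.2 ha.le)
    calc I s = ∫ t in (0:ℝ)..s, (0:ℝ) := intervalIntegral.integral_congr this
    _ = 0 := intervalIntegral.integral_zero
  have hInn : ∀ s, 0 ≤ s → 0 ≤ I s := fun s hs =>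
    intervalIntegral.integral_nonneg hs (fun x _ => (hψ01 x).1)
  have hIpos : ∀ s, a < s → 0 < I s := by
    intro s hs
    set u := min s (a + ε) with hu
    have hau : a < u := lt_min hs (by linarith)
    have hus : u ≤ s := min_le_left _ _
    have h1 : ∫ t in a..u, ψ t > 0 :=
      intervalIntegral.intervalIntegral_pos_of_pos_on (hint a u)
        (fun x hx => hψpos x hx.1) hau
    have h2 : 0 ≤ ∫ t in u..s, ψ t :=
      intervalIntegral.integral_nonneg hus (fun x _ => (hψ01 x).1)
    have e1 : (∫ t in (0:ℝ)..a, ψ t) + ∫ t in a..s, ψ t = I s :=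
      intervalIntegral.integral_add_adjacent_intervals (hint 0 a) (hint a s)
    have e2 : (∫ t in a..u, ψ t) + ∫ t in u..s, ψ t = ∫ t in a..s, ψ t :=
      intervalIntegral.integral_add_adjacent_intervals (hint a u) (hint u s)
    have e3 : I a = 0 := hIzero a le_rfl
    have e3' : (∫ t in (0:ℝ)..a, ψ t) = 0 := e3
    linarith
  refine ⟨fun s => s - I s, fun s => 1 - ψ s, ?_, ?_, ?_, ?_, ?_, ?_, ?_⟩
  · -- ContDiff ℝ 3 η
    have hI3 : ContDiff ℝ 3 I := by
      rw [show (3 : WithTop ℕ∞) = 2 + 1 by norm_num, contDiff_succ_iff_deriv]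
      refine ⟨fun x => (hId x).differentiableAt, by simp, ?_⟩
      have : deriv I = ψ := funext fun x => (hId x).deriv
      rw [this]
      exact Real.smoothTransition.contDiff.comp
        ((contDiff_id.sub contDiff_const).div_const ε)
    exact contDiff_id.sub hI3
  · exact fun x => (hasDerivAt_id x).sub (hId x)
  · intro x
    have h := hψ01 x
    exact ⟨by dsimp only; linarith [h.2], by dsimp only; linarith [h.1]⟩
  · intro s hs
    dsimp only; rw [hIzero s hs]; ring
  · intro s hs
    have hmono : Monotone (fun s => s - I s) := by
      refine monotone_of_deriv_nonneg (fun x => ((hasDerivAt_id x).sub (hId x)).differentiableAt) ?_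
      intro x
      have hd : HasDerivAt (fun s => s - I s) (1 - ψ x) x := (hasDerivAt_id x).sub (hId x)
      rw [hd.deriv]
      linarith [(hψ01 x).2]
    have h0 : (fun s => s - I s) 0 = 0 := by
      dsimp only; rw [hIzero 0 ha.le]; ring
    have := hmono hs
    rw [h0] at this
    exact this
  · intro s hs
    dsimp only; linarith [hIpos s hs]
  · intro s
    rcases le_or_gt s (a + ε) with h | h
    · rcases le_or_gt s a with h' | h'
      · dsimp only; rw [hIzero s h']; linarith
      · dsimp only; linarith [hIpos s h']
    · have hcap : ∫ t in (a+ε)..s, ψ t = s - (a+ε) := by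
        have : EqOn ψ (fun _ => (1:ℝ)) (uIcc (a+ε) s) := by
          intro t ht
          rcases Set.mem_uIcc.1 ht with h1 | h1
          · exact hψ1 t h1.1
          · exact hψ1 t (le_trans h.le h1.1)
        calc (∫ t in (a+ε)..s, ψ t) = ∫ t in (a+ε)..s, (1:ℝ) :=
              intervalIntegral.integral_congr this
        _ = s - (a+ε) := by simp
      have e1 : I (a+ε) + ∫ t in (a+ε)..s, ψ t = I s :=
        intervalIntegral.integral_add_adjacent_intervals (hint 0 (a+ε)) (hint (a+ε) s)
      have := hInn (a+ε) (by linarith)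
      dsimp only
      rw [← e1, hcap]; linarith

set_option maxHeartbeats 1000000 in
/-- Lemma 4.2 (modification of a Perona–Malik profile). -/
theorem stmt_11 (f : ℝ → ℝ) (s₀ : ℝ) (hPM : HypPM f s₀)
    (sm sp : ℝ → ℝ) (hroots : PMroots f s₀ sm sp)
    (r₁ r₂ : ℝ) (h1 : 0 < r₁) (h12 : r₁ < r₂) (h2 : r₂ < sig f s₀) :
    ∃ (σt ft : ℝ → ℝ) (θ Θ : ℝ), 0 < θ ∧ θ ≤ Θ ∧
      ContDiffOn ℝ 3 σt (Ici 0) ∧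
      (∀ s ∈ Icc 0 (sm r₁), σt s = sig f s) ∧
      (∀ s ∈ Ioo (sm r₁) (sp r₂), σt s < sig f s) ∧
      (∀ s ∈ Ici (0:ℝ), θ ≤ derivWithin σt (Ici 0) s ∧ derivWithin σt (Ici 0) s ≤ Θ) ∧
      (∀ s : ℝ, 0 < s → ft s = σt (Real.sqrt s) / Real.sqrt s) ∧
      ft 0 = f 0 ∧
      ContDiffOn ℝ 3 ft (Ici 0) ∧
      (∀ s ∈ Ici (0:ℝ), θ ≤ ft s + 2 * s * derivWithin ft (Ici 0) s ∧
        ft s + 2 * s * derivWithin ft (Ici 0) s ≤ Θ) := by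
  have hs₀ : 0 < s₀ := hPM.hs₀
  obtain ⟨hsm1, hsig1, hsp1, hsigp1⟩ := hroots r₁ ⟨h1, h12.trans h2⟩
  obtain ⟨hsm2, hsig2, hsp2, hsigp2⟩ := hroots r₂ ⟨h1.trans h12, h2⟩
  set S : ℝ → ℝ := sig f with hSdef
  set a := sm r₁ with hadef
  set p := sp r₂ with hpdef
  have h0a : 0 < a := hsm1.1
  have has₀ : a < s₀ := hsm1.2
  have hps₀ : s₀ < p := hsp2
  have hp0 : 0 < p := hs₀.trans hps₀
  -- continuity of S on Ici 0
  have hScont : ContinuousOn S (Ici 0) := by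
    apply ContinuousOn.mul continuousOn_id
    exact hPM.cont.comp (continuous_pow 2).continuousOn (fun s _ => sq_nonneg s)
  -- S is C³ on Ico 0 s₀
  have hsqmapsto : MapsTo (fun s : ℝ => s ^ 2) (Ico 0 s₀) (Ico 0 (s₀ ^ 2)) := by
    intro s hs
    exact ⟨sq_nonneg s, pow_lt_pow_left₀ hs.2 hs.1 two_ne_zero⟩
  have hSC3 : ContDiffOn ℝ 3 S (Ico 0 s₀) :=
    contDiffOn_id.mul (hPM.c3.comp ((contDiff_id.pow 2).contDiffOn) hsqmapsto)
  set F : ℝ → ℝ := fun s => derivWithin S (Ici 0) s with hFdef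
  have hsetcongr : ∀ t : ℝ, t < s₀ → Ici (0:ℝ) =ᶠ[𝓝 t] Ico (0:ℝ) s₀ := by
    intro t ht
    filter_upwards [Iio_mem_nhds ht] with y hy
    simp only [mem_Ici, mem_Ico, eq_iff_iff]
    exact ⟨fun h => ⟨h, hy⟩, fun h => h.1⟩
  have hFico : ∀ t ∈ Ico (0:ℝ) s₀, F t = derivWithin S (Ico 0 s₀) t := fun t ht =>
    derivWithin_congr_set (hsetcongr t ht.2)
  have hicomem : ∀ t ∈ Ico (0:ℝ) s₀, Ico (0:ℝ) s₀ ∈ 𝓝[Ici 0] t := by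
    intro t ht
    rw [← Ici_inter_Iio]
    exact inter_mem_nhdsWithin (Ici 0) (Iio_mem_nhds ht.2)
  have hFd : ∀ t ∈ Ico (0:ℝ) s₀, HasDerivWithinAt S (F t) (Ici 0) t := by
    intro t ht
    have h1 : HasDerivWithinAt S (derivWithin S (Ico 0 s₀) t) (Ico 0 s₀) t :=
      ((hSC3.differentiableOn (by norm_num)) t ht).hasDerivWithinAt
    have h2 := h1.mono_of_mem_nhdsWithin (hicomem t ht)
    rwa [← hFico t ht] at h2
  have hFcont : ContinuousOn F (Ico 0 s₀) :=
    (hSC3.continuousOn_derivWithin (uniqueDiffOn_Ico 0 s₀) (by norm_num)).congr hFico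
  have hderiv_eq : ∀ x : ℝ, 0 < x → derivWithin S (Ici 0) x = deriv S x := fun x hx =>
    derivWithin_of_mem_nhds (Ici_mem_nhds hx)
  have hmono : StrictMonoOn S (Icc 0 s₀) := by
    apply strictMonoOn_of_deriv_pos (convex_Icc 0 s₀) (hScont.mono Icc_subset_Ici_self)
    intro x hx
    rw [interior_Icc] at hx
    rw [← hderiv_eq x hx.1]
    exact hPM.inc x ⟨hx.1.le, hx.2⟩
  have hanti : StrictAntiOn S (Ici s₀) := by
    apply strictAntiOn_of_deriv_neg (convex_Ici s₀) (hScont.mono (Ici_subset_Ici.2 hs₀.le))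
    intro x hx
    rw [interior_Ici] at hx
    rw [← hderiv_eq x (hs₀.trans hx)]
    exact hPM.dec x hx
  -- parameters
  set c := sm r₂ with hcdef
  have hc0 : 0 < c := hsm2.1
  have hcs₀ : c < s₀ := hsm2.2
  have hac : a < c := by
    have := (hmono.lt_iff_lt ⟨h0a.le, has₀.le⟩ ⟨hc0.le, hcs₀.le⟩).1
    apply this
    rw [hsig1, hsig2]
    exact h12
  set b := (a + c) / 2 with hbdef
  have hab : a < b := by simp only [hbdef]; linarith
  have hbc : b < c := by simp only [hbdef]; linarith
  have hb0 : 0 < b := h0a.trans hab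
  have hbs₀ : b < s₀ := hbc.trans hcs₀
  set ε := (b - a) / 2 with hεdef
  have hε : 0 < ε := by simp only [hεdef]; linarith
  have hcapb : a + ε < b := by simp only [hεdef]; linarith
  obtain ⟨η, η', hηC3, hηd, hη'01, hηid, hηnn, hηlt, hηcap⟩ := exists_eta a ε h0a hε
  have hηleb : ∀ s, η s ≤ b := fun s => (hηcap s).trans hcapb.le
  have hηmem : ∀ s ∈ Ici (0:ℝ), η s ∈ Icc 0 b := fun s hs => ⟨hηnn s hs, hηleb s⟩
  have hbsub : Icc (0:ℝ) b ⊆ Ico 0 s₀ := fun x hx => ⟨hx.1, lt_of_le_of_lt hx.2 hbs₀⟩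
  -- min and max of F on Icc 0 b
  obtain ⟨tm, htm, hmin⟩ :=
    isCompact_Icc.exists_isMinOn (nonempty_Icc.2 hb0.le) (hFcont.mono hbsub)
  obtain ⟨tM, htM, hmax⟩ :=
    isCompact_Icc.exists_isMaxOn (nonempty_Icc.2 hb0.le) (hFcont.mono hbsub)
  set m₁ := F tm with hm₁def
  set Θ := F tM with hΘdef
  have hm₁pos : 0 < m₁ := hPM.inc tm (hbsub htm)
  have hminle : ∀ x ∈ Icc (0:ℝ) b, m₁ ≤ F x := fun x hx => hmin hx
  have hmaxle : ∀ x ∈ Icc (0:ℝ) b, F x ≤ Θ := fun x hx => hmax hx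
  have hm₁Θ : m₁ ≤ Θ := hmaxle tm htm
  have hg : 0 < S b - S (a + ε) :=
    sub_pos.2 (hmono ⟨by linarith, by linarith⟩ ⟨hb0.le, hbs₀.le⟩ hcapb)
  set g := S b - S (a + ε) with hgdef
  set θ := min m₁ (g / p) / 2 with hθdef
  have hmingp : 0 < min m₁ (g / p) := lt_min hm₁pos (div_pos hg hp0)
  have hθpos : 0 < θ := by simp only [hθdef]; linarith
  have hθm₁ : θ < m₁ := by
    have := min_le_left m₁ (g / p)
    simp only [hθdef]; linarith
  have hθg : θ * p < g := by
    have h1 : min m₁ (g / p) ≤ g / p := min_le_right _ _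
    have h2 : θ < g / p := by simp only [hθdef]; linarith
    calc θ * p < (g / p) * p := mul_lt_mul_of_pos_right h2 hp0
    _ = g := by field_simp
  have hθΘ : θ ≤ Θ := by linarith
  set σt : ℝ → ℝ := fun s => S (η s) + θ * (s - η s) with hσtdef
  set ft : ℝ → ℝ := fun s => if s = 0 then f 0 else σt (Real.sqrt s) / Real.sqrt s
    with hftdef
  have hηmaps : MapsTo η (Ici 0) (Ico 0 s₀) := fun s hs => hbsub (hηmem s hs)
  -- C³ regularity of σt
  have hσtC3 : ContDiffOn ℝ 3 σt (Ici 0) := by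
    apply ContDiffOn.add
    · exact hSC3.comp hηC3.contDiffOn hηmaps
    · exact contDiffOn_const.mul (contDiffOn_id.sub hηC3.contDiffOn)
  -- σt = S on [0, a]
  have heq : ∀ s ∈ Icc (0:ℝ) a, σt s = S s := by
    intro s hs
    simp only [hσtdef]
    rw [hηid s hs.2]
    ring
  -- derivative formula for σt
  have hσt' : ∀ s ∈ Ici (0:ℝ),
      HasDerivWithinAt σt (F (η s) * η' s + θ * (1 - η' s)) (Ici 0) s := by
    intro s hs
    have h1 : HasDerivWithinAt (fun x => S (η x)) (F (η s) * η' s) (Ici 0) s :=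
      (hFd (η s) (hηmaps hs)).comp s (hηd s).hasDerivWithinAt (fun x hx => hηnn x hx)
    have h2 : HasDerivWithinAt (fun x => θ * (x - η x)) (θ * (1 - η' s)) (Ici 0) s :=
      (((hasDerivAt_id s).sub (hηd s)).hasDerivWithinAt).const_mul θ
    exact h1.add h2
  have hDval : ∀ s ∈ Ici (0:ℝ),
      derivWithin σt (Ici 0) s = F (η s) * η' s + θ * (1 - η' s) :=
    fun s hs => (hσt' s hs).derivWithin (uniqueDiffOn_Ici 0 s hs)
  have hbound : ∀ s ∈ Ici (0:ℝ),
      θ ≤ derivWithin σt (Ici 0) s ∧ derivWithin σt (Ici 0) s ≤ Θ := by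
    intro s hs
    rw [hDval s hs]
    obtain ⟨hq0, hq1⟩ := hη'01 s
    have hv1 : m₁ ≤ F (η s) := hminle _ (hηmem s hs)
    have hv2 : F (η s) ≤ Θ := hmaxle _ (hηmem s hs)
    constructor
    · linarith only [mul_nonneg (sub_nonneg.2 (hθm₁.le.trans hv1)) hq0]
    · linarith only [mul_nonneg (sub_nonneg.2 hv2) hq0,
        mul_nonneg (sub_nonneg.2 hθΘ) (sub_nonneg.2 hq1)]
  -- σt < S on (a, p)
  have hmono2 : StrictMonoOn (fun x => S x - θ * x) (Icc 0 b) := by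
    apply strictMonoOn_of_deriv_pos (convex_Icc 0 b)
    · exact (hScont.mono (fun x hx => hx.1)).sub
        (continuous_const.mul continuous_id).continuousOn
    · intro x hx
      rw [interior_Icc] at hx
      have hdx : HasDerivAt (fun x => S x - θ * x) (F x - θ * 1) x :=
        ((hFd x (hbsub ⟨hx.1.le, hx.2.le⟩)).hasDerivAt (Ici_mem_nhds hx.1)).sub
          ((hasDerivAt_id x).const_mul θ)
      rw [hdx.deriv]
      have := hminle x ⟨hx.1.le, hx.2.le⟩
      linarith
  have hlt : ∀ s ∈ Ioo a p, σt s < S s := by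
    intro s hso
    have hs0 : 0 < s := h0a.trans hso.1
    rcases le_or_gt s b with hsb | hsb
    · have hmem1 : η s ∈ Icc 0 b := ⟨hηnn s hs0.le, hηleb s⟩
      have hmem2 : s ∈ Icc 0 b := ⟨hs0.le, hsb⟩
      have h3 := hmono2 hmem1 hmem2 (hηlt s hso.1)
      simp only at h3
      simp only [hσtdef]
      linarith
    · have h1 : S (η s) ≤ S (a + ε) :=
        hmono.monotoneOn ⟨hηnn s hs0.le, by linarith [hηcap s]⟩ ⟨by linarith, by linarith⟩
          (hηcap s)
      have h2 : θ * (s - η s) < g := by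
        have h2a : s - η s < p := by linarith [hηnn s hs0.le, hso.2]
        calc θ * (s - η s) < θ * p := mul_lt_mul_of_pos_left h2a hθpos
        _ < g := hθg
      have h3 : S b ≤ S s := by
        rcases le_or_gt s s₀ with h4 | h4
        · exact (hmono ⟨hb0.le, hbs₀.le⟩ ⟨hs0.le, h4⟩ hsb).le
        · have h5 : S p < S s := hanti h4.le hps₀.le hso.2
          have h6 : S b < S c := hmono ⟨hb0.le, hbs₀.le⟩ ⟨hc0.le, hcs₀.le⟩ hbc
          rw [hsigp2] at h5
          rw [hsig2] at h6
          linarith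
      simp only [hσtdef]
      have hge : g = S b - S (a + ε) := rfl
      linarith
  -- properties of ft
  have hftpos : ∀ s : ℝ, 0 < s → ft s = σt (Real.sqrt s) / Real.sqrt s := by
    intro s hs
    simp only [hftdef, if_neg hs.ne']
  have hftzero : ft 0 = f 0 := by simp only [hftdef, if_pos rfl]
  have ha2 : a ^ 2 < s₀ ^ 2 := pow_lt_pow_left₀ has₀ h0a.le two_ne_zero
  have ha2pos : 0 < a ^ 2 := by positivity
  have hfteqf : ∀ s ∈ Ico (0:ℝ) (a ^ 2), ft s = f s := by
    intro s hsm
    rcases eq_or_lt_of_le hsm.1 with h0 | h0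
    · rw [← h0, hftzero]
    · have hsq : Real.sqrt s < a := (Real.sqrt_lt' h0a).2 hsm.2
      have hsqpos : 0 < Real.sqrt s := Real.sqrt_pos.2 h0
      have hsg : σt (Real.sqrt s) = S (Real.sqrt s) :=
        heq _ ⟨Real.sqrt_nonneg s, hsq.le⟩
      rw [hftpos s h0, hsg]
      have : S (Real.sqrt s) = Real.sqrt s * f s := by
        show Real.sqrt s * f (Real.sqrt s ^ 2) = _
        rw [Real.sq_sqrt h0.le]
      rw [this, mul_comm, mul_div_assoc, div_self hsqpos.ne', mul_one]
  have hftC3 : ContDiffOn ℝ 3 ft (Ici 0) := by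
    intro x hx
    rcases eq_or_lt_of_le (mem_Ici.1 hx) with h0 | h0
    · have h1 : ContDiffOn ℝ 3 f (Ico 0 (a ^ 2)) :=
        hPM.c3.mono (Ico_subset_Ico_right ha2.le)
      have h2 : ContDiffWithinAt ℝ 3 ft (Ico 0 (a ^ 2)) 0 :=
        (h1 0 ⟨le_rfl, ha2pos⟩).congr (fun y hy => hfteqf y hy)
          (hfteqf 0 ⟨le_rfl, ha2pos⟩)
      rw [← h0]
      exact h2.mono_of_mem_nhdsWithin (Ico_mem_nhdsGE ha2pos)
    · have hsq : 0 < Real.sqrt x := Real.sqrt_pos.2 h0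
      have hσtAt : ContDiffAt ℝ 3 σt (Real.sqrt x) := hσtC3.contDiffAt (Ici_mem_nhds hsq)
      have h1 : ContDiffAt ℝ 3 (fun s => σt (Real.sqrt s) / Real.sqrt s) x :=
        (hσtAt.comp x (Real.contDiffAt_sqrt h0.ne')).div (Real.contDiffAt_sqrt h0.ne')
          hsq.ne'
      have h2 : ft =ᶠ[𝓝 x] fun s => σt (Real.sqrt s) / Real.sqrt s := by
        filter_upwards [Ioi_mem_nhds h0] with y hy
        simp only [hftdef, if_neg (ne_of_gt (mem_Ioi.1 hy))]
      exact (h1.congr_of_eventuallyEq h2).contDiffWithinAt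
  -- F 0 = f 0
  have hF0 : F 0 = f 0 := by
    have hf0 : DifferentiableWithinAt ℝ f (Ico 0 (s₀ ^ 2)) 0 :=
      (hPM.c3.differentiableOn (by norm_num)) 0 ⟨le_rfl, by positivity⟩
    have hpow : HasDerivAt (fun s : ℝ => s ^ 2) ((2 : ℕ) * (0:ℝ) ^ 1) 0 := hasDerivAt_pow 2 0
    have hmapsq : MapsTo (fun s : ℝ => s ^ 2) (Ico 0 a) (Ico 0 (s₀ ^ 2)) := by
      intro y hy
      exact ⟨sq_nonneg y, pow_lt_pow_left₀ (hy.2.trans has₀) hy.1 two_ne_zero⟩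
    have hfw : HasDerivWithinAt f (derivWithin f (Ico 0 (s₀ ^ 2)) 0)
        (Ico 0 (s₀ ^ 2)) ((0:ℝ) ^ 2) := by
      have h00 : ((0:ℝ) ^ 2) = (0:ℝ) := by norm_num
      rw [h00]
      exact hf0.hasDerivWithinAt
    have hinner : HasDerivWithinAt (fun s : ℝ => f (s ^ 2))
        (derivWithin f (Ico 0 (s₀ ^ 2)) 0 * ((2 : ℕ) * (0:ℝ) ^ 1)) (Ico 0 a) 0 :=
      HasDerivWithinAt.comp (h₂ := f) (h := fun s : ℝ => s ^ 2) 0 hfw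
        hpow.hasDerivWithinAt hmapsq
    have houter : HasDerivWithinAt S (f 0) (Ico 0 a) 0 := by
      have hmul := (hasDerivWithinAt_id 0 (Ico 0 a)).mul hinner
      have hfun : S = fun y => id y * f (y ^ 2) := rfl
      rw [hfun]
      exact hmul.congr_deriv (by norm_num)
    have hIci : HasDerivWithinAt S (f 0) (Ici 0) 0 :=
      houter.mono_of_mem_nhdsWithin (Ico_mem_nhdsGE h0a)
    exact hIci.derivWithin (uniqueDiffOn_Ici 0 0 Set.self_mem_Ici)
  -- the f̃ bound
  have hftbound : ∀ s ∈ Ici (0:ℝ),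
      θ ≤ ft s + 2 * s * derivWithin ft (Ici 0) s ∧
        ft s + 2 * s * derivWithin ft (Ici 0) s ≤ Θ := by
    intro s hs
    rcases eq_or_lt_of_le (mem_Ici.1 hs) with h0 | h0
    · rw [← h0]
      have hrw : ft 0 + 2 * 0 * derivWithin ft (Ici 0) 0 = f 0 := by
        rw [hftzero]; ring
      rw [hrw]
      have h1 : m₁ ≤ F 0 := hminle 0 ⟨le_rfl, hb0.le⟩
      have h2 : F 0 ≤ Θ := hmaxle 0 ⟨le_rfl, hb0.le⟩
      rw [hF0] at h1 h2
      exact ⟨by linarith, h2⟩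
    · set t := Real.sqrt s with htdef
      have ht : 0 < t := Real.sqrt_pos.2 h0
      have htne : t ≠ 0 := ht.ne'
      have hts : t ^ 2 = s := Real.sq_sqrt h0.le
      set K := derivWithin σt (Ici 0) t with hKdef
      have hKb := hbound t ht.le
      have hK : HasDerivAt σt K t := by
        have h1 := (hσt' t ht.le).hasDerivAt (Ici_mem_nhds ht)
        rw [hKdef, hDval t ht.le]
        exact h1
      have hsq : HasDerivAt Real.sqrt (1 / (2 * t)) s := Real.hasDerivAt_sqrt h0.ne'
      have hcomp : HasDerivAt (fun x => σt (Real.sqrt x)) (K * (1 / (2 * t))) s :=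
        hK.comp s hsq
      have hdiv : HasDerivAt (fun x => σt (Real.sqrt x) / Real.sqrt x)
          ((K * (1 / (2 * t)) * t - σt t * (1 / (2 * t))) / t ^ 2) s :=
        hcomp.div hsq htne
      have hfteq' : ft =ᶠ[𝓝 s] fun x => σt (Real.sqrt x) / Real.sqrt x := by
        filter_upwards [Ioi_mem_nhds h0] with y hy
        simp only [hftdef, if_neg (ne_of_gt (mem_Ioi.1 hy))]
      have hft' : HasDerivAt ft
          ((K * (1 / (2 * t)) * t - σt t * (1 / (2 * t))) / t ^ 2) s :=
        hdiv.congr_of_eventuallyEq hfteq'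
      have hdw : derivWithin ft (Ici 0) s
          = (K * (1 / (2 * t)) * t - σt t * (1 / (2 * t))) / t ^ 2 := by
        rw [derivWithin_of_mem_nhds (Ici_mem_nhds h0)]
        exact hft'.deriv
      have hfts : ft s = σt t / t := hftpos s h0
      have key : ft s + 2 * s * derivWithin ft (Ici 0) s = K := by
        rw [hdw, hfts, ← hts]
        field_simp
        ring
      rw [key]
      exact hKb
  exact ⟨σt, ft, θ, Θ, hθpos, hθΘ, hσtC3, heq, hlt, hbound, hftpos, hftzero, hftC3, hftbound⟩
end
end

section
/- Let ξ be a (1+n)×(n+1) real matrix. Then ξ ∈ R(F₀) if and only if there exist numbers t₋ < 0 < t₊ and vectors q, γ ∈ ℝⁿ with |q| = 1 and γ·q = 0 such that for every b ∈ ℝ \ {0}, setting η = [[q, b], [(1/b) γ⊗q, γ]] (a (1+n)×(n+1) matrix with first row (q, b), lower-left n×n block (1/b) γ⊗q, and last column entries b and γ), one has ξ + t₋ η ∈ F₋ and ξ + t₊ η ∈ F₊. This holds in both Case I and Case II. -/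
open MeasureTheory Set Filter
open scoped NNReal ENNReal Topology

noncomputable section


variable {n : ℕ}

/-- a `(1+n) × (n+1)` matrix in block form `[[p, c], [B, β]]`:
`ξ.1 = p`, `ξ.2.1 = c`, `ξ.2.2.1 = B`, `ξ.2.2.2 = β`. -/
abbrev Mtx (n : ℕ) : Type := Euc n × ℝ × Matrix (Fin n) (Fin n) ℝ × Euc n

/-- the actual `(n+1) × (n+1)` real matrix determined by the block data. -/
def Mtx.toMatrix (ξ : Mtx n) : Matrix (Fin (n+1)) (Fin (n+1)) ℝ :=
  Matrix.of fun i j =>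
    if _ : (i : ℕ) = 0 then
      (if hj : (j : ℕ) < n then ξ.1 ⟨j, hj⟩ else ξ.2.1)
    else
      (if hj : (j : ℕ) < n then
        ξ.2.2.1 ⟨(i : ℕ) - 1, by have := i.isLt; omega⟩ ⟨j, hj⟩
      else ξ.2.2.2 ⟨(i : ℕ) - 1, by have := i.isLt; omega⟩)

/-- the set of matrices `[[p,c],[B,A(p)]]` with `tr B = 0` and `lo < |p| < hi`. -/
def Fset (A : Euc n → Euc n) (lo hi : ℝ) : Set (Mtx n) :=
  {ξ | lo < ‖ξ.1‖ ∧ ‖ξ.1‖ < hi ∧ Matrix.trace ξ.2.2.1 = 0 ∧ ξ.2.2.2 = A ξ.1}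

/-- `R(F₀)`: the union of the open rank-one segments joining `Fm` and `Fp`. -/
def RF (Fm Fp : Set (Mtx n)) : Set (Mtx n) :=
  {ξ | ∃ ξm ∈ Fm, ∃ ξp ∈ Fp,
    (Mtx.toMatrix ξp - Mtx.toMatrix ξm).rank = 1 ∧
    ∃ lam : ℝ, 0 < lam ∧ lam < 1 ∧ ξ = lam • ξp + (1 - lam) • ξm}

/-- the rank-one matrix `η = [[q, b], [(1/b) γ⊗q, γ]]`. -/
def etaMat (q γ : Euc n) (b : ℝ) : Mtx n :=
  (q, b, b⁻¹ • Matrix.of (fun i j => γ i * q j), γ)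


/-! ### Auxiliary lemmas for `stmt_14` -/

section Aux
open scoped Matrix

lemma rinner_eq_sum (x y : Euc n) : rinner x y = ∑ i, x i * y i := by
  simp [rinner, PiLp.inner_apply, RCLike.inner_apply, conj_trivial, mul_comm]

lemma vmv_mulVec {m : ℕ} (u v x : Fin m → ℝ) :
    Matrix.vecMulVec u v *ᵥ x = (v ⬝ᵥ x) • u := by
  ext i
  simp only [Matrix.mulVec, Matrix.vecMulVec, dotProduct, Matrix.of_apply,
    Pi.smul_apply, smul_eq_mul, Finset.mul_sum]
  rw [Finset.sum_mul]; exact Finset.sum_congr rfl fun j _ => by ring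

lemma rank_vmv {m : ℕ} (u v : Fin m → ℝ) (hu : u ≠ 0) (hv : v ≠ 0) :
    (Matrix.vecMulVec u v).rank = 1 := by
  have hle : (Matrix.vecMulVec u v).rank ≤ 1 := by
    have hsub : LinearMap.range (Matrix.vecMulVec u v).mulVecLin ≤ Submodule.span ℝ {u} := by
      rintro y ⟨x, rfl⟩
      rw [Matrix.mulVecLin_apply, vmv_mulVec]
      exact Submodule.smul_mem _ _ (Submodule.mem_span_singleton_self u)
    calc (Matrix.vecMulVec u v).rank ≤ Module.finrank ℝ ↥(Submodule.span ℝ {u}) :=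
          Submodule.finrank_mono hsub
      _ = 1 := finrank_span_singleton hu
  have hge : (Matrix.vecMulVec u v).rank ≠ 0 := by
    intro h
    have hbot : LinearMap.range (Matrix.vecMulVec u v).mulVecLin = ⊥ :=
      Submodule.finrank_eq_zero.mp h
    obtain ⟨j, hj⟩ := Function.ne_iff.mp hv
    have hmem : Matrix.vecMulVec u v *ᵥ Pi.single j 1 ∈
        LinearMap.range (Matrix.vecMulVec u v).mulVecLin := ⟨Pi.single j 1, rfl⟩
    rw [hbot, Submodule.mem_bot, vmv_mulVec] at hmem
    have hvj : v ⬝ᵥ Pi.single j 1 = v j := by simp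
    rw [hvj] at hmem
    rcases smul_eq_zero.mp hmem with h1 | h1
    · exact hj (by simpa using h1)
    · exact hu h1
  omega

lemma rank_one_rows {m : ℕ} (M : Matrix (Fin m) (Fin m) ℝ) (hr : M.rank = 1) (i₀ : Fin m)
    (h0 : M i₀ ≠ 0) : ∀ i, ∃ c : ℝ, M i = c • M i₀ := by
  intro i
  have hrow : ∀ k, M k ∈ LinearMap.range Mᵀ.mulVecLin := by
    intro k
    exact ⟨Pi.single k 1, by ext j; simp [Matrix.mulVecLin, Matrix.transpose_apply]⟩
  have hW : Module.finrank ℝ ↥(LinearMap.range Mᵀ.mulVecLin) = 1 := by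
    have h := Matrix.rank_transpose M
    rw [hr] at h; exact h
  have hle : Submodule.span ℝ {M i₀} ≤ LinearMap.range Mᵀ.mulVecLin := by
    rw [Submodule.span_le, Set.singleton_subset_iff]; exact hrow i₀
  have heq : Submodule.span ℝ {M i₀} = LinearMap.range Mᵀ.mulVecLin :=
    Submodule.eq_of_le_of_finrank_le hle (by rw [hW, finrank_span_singleton h0])
  obtain ⟨c, hc⟩ := Submodule.mem_span_singleton.mp ((heq ▸ hrow i))
  exact ⟨c, hc.symm⟩

lemma comp1 (ξ η : Mtx n) (t : ℝ) : (ξ + t • η).1 = ξ.1 + t • η.1 := rfl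
lemma comp3 (ξ η : Mtx n) (t : ℝ) : (ξ + t • η).2.2.1 = ξ.2.2.1 + t • η.2.2.1 := rfl
lemma comp4 (ξ η : Mtx n) (t : ℝ) : (ξ + t • η).2.2.2 = ξ.2.2.2 + t • η.2.2.2 := rfl

lemma toMatrix_add_smul (ξ η : Mtx n) (t : ℝ) :
    (ξ + t • η).toMatrix = ξ.toMatrix + t • η.toMatrix := by
  ext i j
  by_cases hi : (i:ℕ) = 0 <;> by_cases hj : (j:ℕ) < n <;>
    simp [Mtx.toMatrix, hi, hj, comp1, comp3, comp4, mul_comm,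
      show (ξ + t • η).2.1 = ξ.2.1 + t * η.2.1 from rfl] <;> split_ifs <;> ring

lemma eta_vmv (q γ : Euc n) :
    (etaMat q γ 1).toMatrix = Matrix.vecMulVec
      (fun i : Fin (n+1) =>
        if _ : (i:ℕ) = 0 then 1 else γ ⟨(i:ℕ)-1, by have := i.isLt; omega⟩)
      (fun j : Fin (n+1) => if h : (j:ℕ) < n then q ⟨j, h⟩ else 1) := by
  ext i j
  by_cases hi : (i:ℕ) = 0 <;> by_cases hj : (j:ℕ) < n <;>
    simp [Mtx.toMatrix, etaMat, Matrix.vecMulVec, hi, hj, mul_comm] <;> split_ifs <;> rfl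

lemma trace_outer (γ q : Euc n) :
    Matrix.trace (Matrix.of fun i j => γ i * q j) = rinner γ q := by
  simp [Matrix.trace, Matrix.diag, rinner_eq_sum]

lemma mem_fset_shift (A : Euc n → Euc n) (lo hi : ℝ) (ξ : Mtx n) (q γ : Euc n) (t b : ℝ)
    (hγq : rinner γ q = 0) :
    ξ + t • etaMat q γ b ∈ Fset A lo hi ↔
      (lo < ‖ξ.1 + t • q‖ ∧ ‖ξ.1 + t • q‖ < hi ∧ Matrix.trace ξ.2.2.1 = 0 ∧
        ξ.2.2.2 + t • γ = A (ξ.1 + t • q)) := by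
  have h3 : Matrix.trace (ξ + t • etaMat q γ b).2.2.1 = Matrix.trace ξ.2.2.1 := by
    rw [comp3]
    show Matrix.trace (ξ.2.2.1 + t • (b⁻¹ • Matrix.of fun i j => γ i * q j)) = _
    rw [Matrix.trace_add, smul_smul, Matrix.trace_smul, trace_outer, hγq, smul_zero, add_zero]
  have h1 : (ξ + t • etaMat q γ b).1 = ξ.1 + t • q := rfl
  have h4 : (ξ + t • etaMat q γ b).2.2.2 = ξ.2.2.2 + t • γ := rfl
  simp only [Fset, Set.mem_setOf_eq, h1, h3, h4]

lemma keyLemma (A : Euc n → Euc n) (lom him lop hip : ℝ) (hmid : him ≤ lop) (ξ : Mtx n) :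
    ξ ∈ RF (Fset A lom him) (Fset A lop hip) ↔
      (∃ tm tp : ℝ, tm < 0 ∧ 0 < tp ∧ ∃ q γ : Euc n, ‖q‖ = 1 ∧ rinner γ q = 0 ∧
        ∀ b : ℝ, b ≠ 0 →
          ξ + tm • etaMat q γ b ∈ Fset A lom him ∧
          ξ + tp • etaMat q γ b ∈ Fset A lop hip) := by
  constructor
  · rintro ⟨ξm, hm, ξp, hp, hrank, lam, hl0, hl1, hξ⟩
    obtain ⟨hm1, hm2, hm3, hm4⟩ := hm
    obtain ⟨hp1, hp2, hp3, hp4⟩ := hp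
    have hnorm : ‖ξm.1‖ < ‖ξp.1‖ := hm2.trans_le (hmid.trans hp1.le)
    have hne : ξp.1 ≠ ξm.1 := fun h => absurd (h ▸ hnorm) (lt_irrefl _)
    set d : Euc n := ξp.1 - ξm.1 with hd
    have hd0 : d ≠ 0 := sub_ne_zero.2 hne
    set s : ℝ := ‖d‖ with hs
    have hs0 : 0 < s := norm_pos_iff.2 hd0
    set q : Euc n := s⁻¹ • d with hq
    set γ : Euc n := s⁻¹ • (ξp.2.2.2 - ξm.2.2.2) with hγ
    have hqnorm : ‖q‖ = 1 := by
      rw [hq, norm_smul, norm_inv, Real.norm_eq_abs, abs_of_pos hs0, ← hs,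
        inv_mul_cancel₀ hs0.ne']
    -- rank-one structure
    set M : Matrix (Fin (n+1)) (Fin (n+1)) ℝ := ξp.toMatrix - ξm.toMatrix with hM
    have hMrow0 : ∀ j : Fin n, M 0 (Fin.castSucc j) = ξp.1 j - ξm.1 j := by
      intro j
      simp [hM, Mtx.toMatrix, Matrix.sub_apply, j.isLt]
    have hMrow0c : M 0 (Fin.last n) = ξp.2.1 - ξm.2.1 := by
      simp [hM, Mtx.toMatrix, Matrix.sub_apply]
    have hMrowB : ∀ (k j : Fin n), M (Fin.succ k) (Fin.castSucc j) = ξp.2.2.1 k j - ξm.2.2.1 k j := by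
      intro k j
      simp [hM, Mtx.toMatrix, Matrix.sub_apply, j.isLt, Fin.val_succ]
    have hMrowβ : ∀ (k : Fin n), M (Fin.succ k) (Fin.last n) = ξp.2.2.2 k - ξm.2.2.2 k := by
      intro k
      simp [hM, Mtx.toMatrix, Matrix.sub_apply, Fin.val_succ]
    obtain ⟨j0, hj0⟩ : ∃ j : Fin n, d j ≠ 0 := by
      by_contra hcon
      push_neg at hcon
      exact hd0 (PiLp.ext fun j => hcon j)
    have hrow0ne : M 0 ≠ 0 := by
      intro h
      apply hj0
      have := congrFun h (Fin.castSucc j0)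
      rw [hMrow0 j0] at this
      simpa [hd] using this
    obtain hμ := rank_one_rows M hrank 0 hrow0ne
    choose μ hμ using hμ
    have hS : ∑ k : Fin n, μ (Fin.succ k) * (ξp.1 k - ξm.1 k) = 0 := by
      have htr : ∑ k : Fin n, (ξp.2.2.1 k k - ξm.2.2.1 k k) = 0 := by
        have : Matrix.trace ξp.2.2.1 - Matrix.trace ξm.2.2.1 = 0 := by rw [hp3, hm3, sub_zero]
        rw [← this]
        simp [Matrix.trace, Matrix.diag, Finset.sum_sub_distrib]
      rw [← htr]
      refine Finset.sum_congr rfl fun k _ => ?_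
      have := congrFun (hμ (Fin.succ k)) (Fin.castSucc k)
      rw [hMrowB k k] at this
      simp only [Pi.smul_apply, smul_eq_mul, hMrow0] at this
      exact this.symm
    have hγq : rinner γ q = 0 := by
      have hexp : rinner γ q = (s⁻¹ * s⁻¹ * (ξp.2.1 - ξm.2.1)) *
          ∑ k : Fin n, μ (Fin.succ k) * (ξp.1 k - ξm.1 k) := by
        rw [rinner_eq_sum, Finset.mul_sum]
        refine Finset.sum_congr rfl fun k _ => ?_
        have hγk : γ k = s⁻¹ * (ξp.2.2.2 k - ξm.2.2.2 k) := by
          simp [hγ, PiLp.smul_apply, PiLp.sub_apply, smul_eq_mul]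
        have hqk : q k = s⁻¹ * (ξp.1 k - ξm.1 k) := by
          simp [hq, hd, PiLp.smul_apply, PiLp.sub_apply, smul_eq_mul]
        have hβk : ξp.2.2.2 k - ξm.2.2.2 k = μ (Fin.succ k) * (ξp.2.1 - ξm.2.1) := by
          have := congrFun (hμ (Fin.succ k)) (Fin.last n)
          rw [hMrowβ k] at this
          simp only [Pi.smul_apply, smul_eq_mul, hMrow0c] at this
          exact this
        rw [hγk, hqk, hβk]; ring
      rw [hexp, hS, mul_zero]
    -- the component identities
    have hcomp1 : ξ.1 = lam • ξp.1 + (1 - lam) • ξm.1 := by rw [hξ]; rfl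
    have hcomp3 : ξ.2.2.1 = lam • ξp.2.2.1 + (1 - lam) • ξm.2.2.1 := by rw [hξ]; rfl
    have hcomp4 : ξ.2.2.2 = lam • ξp.2.2.2 + (1 - lam) • ξm.2.2.2 := by rw [hξ]; rfl
    have htrξ : Matrix.trace ξ.2.2.1 = 0 := by
      rw [hcomp3, Matrix.trace_add, Matrix.trace_smul, Matrix.trace_smul, hp3, hm3]
      simp
    refine ⟨-(lam * s), (1 - lam) * s, by nlinarith, mul_pos (by linarith) hs0,
      q, γ, hqnorm, hγq, fun b hb => ?_⟩
    have hmsmul : (-(lam * s)) • q = (-lam) • d := by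
      rw [hq, smul_smul]
      congr 1
      field_simp
    have hpsmul : ((1 - lam) * s) • q = (1 - lam) • d := by
      rw [hq, smul_smul]
      congr 1
      field_simp
    have hmγ : (-(lam * s)) • γ = (-lam) • (ξp.2.2.2 - ξm.2.2.2) := by
      rw [hγ, smul_smul]
      congr 1
      field_simp
    have hpγ : ((1 - lam) * s) • γ = (1 - lam) • (ξp.2.2.2 - ξm.2.2.2) := by
      rw [hγ, smul_smul]
      congr 1
      field_simp
    have hxm : ξ.1 + (-(lam * s)) • q = ξm.1 := by
      rw [hcomp1, hmsmul, hd]; module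
    have hxp : ξ.1 + ((1 - lam) * s) • q = ξp.1 := by
      rw [hcomp1, hpsmul, hd]; module
    have hym : ξ.2.2.2 + (-(lam * s)) • γ = ξm.2.2.2 := by
      rw [hcomp4, hmγ]; module
    have hyp : ξ.2.2.2 + ((1 - lam) * s) • γ = ξp.2.2.2 := by
      rw [hcomp4, hpγ]; module
    constructor
    · rw [mem_fset_shift A lom him ξ q γ _ b hγq, hxm, hym]
      exact ⟨hm1, hm2, htrξ, hm4⟩
    · rw [mem_fset_shift A lop hip ξ q γ _ b hγq, hxp, hyp]
      exact ⟨hp1, hp2, htrξ, hp4⟩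
  · rintro ⟨tm, tp, htm, htp, q, γ, hq, hγq, h⟩
    obtain ⟨h1, h2⟩ := h 1 one_ne_zero
    have hd : (0:ℝ) < tp - tm := by linarith
    refine ⟨ξ + tm • etaMat q γ 1, h1, ξ + tp • etaMat q γ 1, h2, ?_, -tm / (tp - tm),
      div_pos (by linarith) hd, ?_, ?_⟩
    · -- rank
      have hq0 : q ≠ 0 := by
        intro h0
        rw [h0, norm_zero] at hq
        exact one_ne_zero hq.symm
      have heq : (ξ + tp • etaMat q γ 1).toMatrix - (ξ + tm • etaMat q γ 1).toMatrix =
          Matrix.vecMulVec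
            ((tp - tm) • fun i : Fin (n+1) =>
              if _ : (i:ℕ) = 0 then 1 else γ ⟨(i:ℕ)-1, by have := i.isLt; omega⟩)
            (fun j : Fin (n+1) => if h : (j:ℕ) < n then q ⟨j, h⟩ else 1) := by
        rw [toMatrix_add_smul, toMatrix_add_smul, eta_vmv]
        ext i j
        simp [Matrix.vecMulVec, Matrix.sub_apply, Matrix.smul_apply]
        split_ifs <;> ring
      rw [heq]
      apply rank_vmv
      · intro hcon
        have := congrFun hcon 0
        simp at this
        exact hd.ne' (by linarith)
      · intro hcon
        have := congrFun hcon (Fin.last n)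
        simp [Fin.last] at this
    · rw [div_lt_one hd]; linarith
    · have hcoef : (-tm / (tp - tm)) * tp + (1 - -tm / (tp - tm)) * tm = 0 := by
        field_simp
        ring
      have hexp : ((-tm / (tp - tm)) : ℝ) • (ξ + tp • etaMat q γ 1) +
          (1 - -tm / (tp - tm)) • (ξ + tm • etaMat q γ 1) =
          ξ + ((-tm / (tp - tm)) * tp + (1 - -tm / (tp - tm)) * tm) • etaMat q γ 1 := by
        module
      rw [hexp, hcoef, zero_smul, add_zero]

end Aux

/-- Lemma 5.2: characterization of `R(F₀)` via collinear rank-one connections,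
in both Case I (Perona–Malik) and Case II (Höllig). -/
theorem stmt_14 (n : ℕ) (f : ℝ → ℝ) (A : Euc n → Euc n)
    (hA : ∀ p, A p = f (‖p‖ ^ 2) • p) (sm sp : ℝ → ℝ) (r₁ r₂ : ℝ) (ξ : Mtx n) :
    (∀ s₀ : ℝ, HypPM f s₀ → PMroots f s₀ sm sp →
      0 < r₁ → r₁ < r₂ → r₂ < sig f s₀ →
      (ξ ∈ RF (Fset A (sm r₁) (sm r₂)) (Fset A (sp r₂) (sp r₁)) ↔
        ∃ tm tp : ℝ, tm < 0 ∧ 0 < tp ∧ ∃ q γ : Euc n, ‖q‖ = 1 ∧ rinner γ q = 0 ∧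
          ∀ b : ℝ, b ≠ 0 →
            ξ + tm • etaMat q γ b ∈ Fset A (sm r₁) (sm r₂) ∧
            ξ + tp • etaMat q γ b ∈ Fset A (sp r₂) (sp r₁))) ∧
    (∀ a s₁ s₂ s1s s2s : ℝ, HypH a f s₁ s₂ → Hroots f s₁ s₂ s1s s2s sm sp →
      sig f s₂ < r₁ → r₁ < r₂ → r₂ < sig f s₁ →
      (ξ ∈ RF (Fset A (sm r₁) (sm r₂)) (Fset A (sp r₁) (sp r₂)) ↔
        ∃ tm tp : ℝ, tm < 0 ∧ 0 < tp ∧ ∃ q γ : Euc n, ‖q‖ = 1 ∧ rinner γ q = 0 ∧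
          ∀ b : ℝ, b ≠ 0 →
            ξ + tm • etaMat q γ b ∈ Fset A (sm r₁) (sm r₂) ∧
            ξ + tp • etaMat q γ b ∈ Fset A (sp r₁) (sp r₂))) := by
  constructor
  · intro s₀ hPM hroots hr1 hr12 hr2
    obtain ⟨hsm2, -, hsp2, -⟩ := hroots r₂ ⟨hr1.trans hr12, hr2⟩
    exact keyLemma A (sm r₁) (sm r₂) (sp r₂) (sp r₁) (hsm2.2.trans hsp2).le ξ
  · intro a s₁ s₂ s1s s2s hH hroots hr1 hr12 hr2
    obtain ⟨-, -, -, -, hroots'⟩ := hroots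
    obtain ⟨hsm2, -, -, -⟩ := hroots' r₂ ⟨hr1.trans hr12, hr2⟩
    obtain ⟨-, -, hsp1, -⟩ := hroots' r₁ ⟨hr1, hr12.trans hr2⟩
    exact keyLemma A (sm r₁) (sm r₂) (sp r₁) (sp r₂)
      ((hsm2.2.trans (hH.hs₁₂.trans hsp1.1)).le) ξ
end
end

section
/- Let p₋, p₊ ∈ ℝⁿ satisfy s₋(r₁) < |p₋| < s₋(r₂) and: in Case I, s₋(r₂) < s₊(r₂) < |p₊| < s₊(r₁); in Case II, s₋(r₂) < s₊(r₁) < |p₊| < s₊(r₂); and suppose (A(p₊) − A(p₋))·(p₊ − p₋) = 0. Then there exists a unit vector ζ⁰ ∈ S^{n−1} such that, with p⁰₋ = s₋(r₂)ζ⁰ and p⁰₊ = s₊(r₂)ζ⁰ (so that A(p⁰₋) = A(p⁰₊) = r₂ζ⁰), one has max{ |p⁰₋ − p₋|, |p⁰₊ − p₊|, |A(p⁰₋) − A(p₋)|, |A(p⁰₊) − A(p₊)| } ≤ h₁(s₋(r₂), s₊(r₂), r₂; s₋(r₂) − s₋(r₁), s₊(r₁) − s₊(r₂), r₂ − r₁)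 in Case I, and ≤ h₂(s₋(r₂), s₊(r₂), r₂; s₋(r₂) − s₋(r₁), s₊(r₂) − s₊(r₁), r₂ − r₁) in Case II, where h₁, h₂ are the continuous functions of the two-dimensional selection lemma (Lemma lem-2d-rank). -/
open MeasureTheory Set Filter
open scoped NNReal ENNReal Topology

noncomputable section


variable {n : ℕ}

/-- the planar unit vector `e(φ) = (cos φ, sin φ)`. -/
def e2 (φ : ℝ) : ℝ × ℝ := (Real.cos φ, Real.sin φ)

/-- the Euclidean dot product on the plane. -/
def dot2 (u v : ℝ × ℝ) : ℝ := u.1 * v.1 + u.2 * v.2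

/-- the Euclidean norm on the plane. -/
def nrm2 (u : ℝ × ℝ) : ℝ := Real.sqrt (u.1 ^ 2 + u.2 ^ 2)

/-- the bounding property of the function `h₁` in Lemma 5.4 (Case I). -/
def SelBoundI (a b c : ℝ) (h : ℝ × ℝ × ℝ → ℝ) : Prop :=
  ∀ δ₁ δ₂ η R₁ R₂ Rt₁ Rt₂ θ : ℝ,
    0 < δ₁ → δ₁ < a → 0 < δ₂ → 0 < η → η < c →
    R₁ ∈ Icc (a - δ₁) a → R₂ ∈ Icc b (b + δ₂) →
    Rt₁ ∈ Icc (c - η) c → Rt₂ ∈ Icc (c - η) c →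
    θ ∈ Icc (-(Real.pi / 2)) (Real.pi / 2) →
    dot2 (Rt₁ • e2 (Real.pi / 2 + θ) - Rt₂ • e2 (Real.pi / 2 - θ))
      (R₁ • e2 (Real.pi / 2 + θ) - R₂ • e2 (Real.pi / 2 - θ)) = 0 →
    -(Real.pi / 2) < θ ∧ θ < Real.pi / 2 ∧ Rt₂ ≤ Rt₁ ∧
      nrm2 (((0:ℝ), a) - R₁ • e2 (Real.pi / 2 + θ)) ≤ h (δ₁, δ₂, η) ∧
      nrm2 (((0:ℝ), b) - R₂ • e2 (Real.pi / 2 - θ)) ≤ h (δ₁, δ₂, η) ∧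
      nrm2 (((0:ℝ), c) - Rt₁ • e2 (Real.pi / 2 + θ)) ≤ h (δ₁, δ₂, η) ∧
      nrm2 (((0:ℝ), c) - Rt₂ • e2 (Real.pi / 2 - θ)) ≤ h (δ₁, δ₂, η)

/-- the bounding property of the function `h₂` in Lemma 5.4 (Case II). -/
def SelBoundII (a b c : ℝ) (h : ℝ × ℝ × ℝ → ℝ) : Prop :=
  ∀ δ₁ δ₂ η R₁ R₂ Rt₁ Rt₂ θ : ℝ,
    0 < δ₁ → δ₁ < a → 0 < δ₂ → δ₂ < b - a → 0 < η → η < c →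
    R₁ ∈ Icc (a - δ₁) a → R₂ ∈ Icc (b - δ₂) b →
    Rt₁ ∈ Icc (c - η) c → Rt₂ ∈ Icc (c - η) c →
    θ ∈ Icc (-(Real.pi / 2)) (Real.pi / 2) →
    dot2 (Rt₁ • e2 (Real.pi / 2 + θ) - Rt₂ • e2 (Real.pi / 2 - θ))
      (R₁ • e2 (Real.pi / 2 + θ) - R₂ • e2 (Real.pi / 2 - θ)) = 0 →
    -(Real.pi / 2) < θ ∧ θ < Real.pi / 2 ∧ Rt₂ ≤ Rt₁ ∧
      nrm2 (((0:ℝ), a) - R₁ • e2 (Real.pi / 2 + θ)) ≤ h (δ₁, δ₂, η) ∧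
      nrm2 (((0:ℝ), b) - R₂ • e2 (Real.pi / 2 - θ)) ≤ h (δ₁, δ₂, η) ∧
      nrm2 (((0:ℝ), c) - Rt₁ • e2 (Real.pi / 2 + θ)) ≤ h (δ₁, δ₂, η) ∧
      nrm2 (((0:ℝ), c) - Rt₂ • e2 (Real.pi / 2 - θ)) ≤ h (δ₁, δ₂, η)


section Stmt17Aux

lemma nrm2_plus (t R θ : ℝ) :
    nrm2 (((0:ℝ), t) - R • e2 (Real.pi/2 + θ)) = Real.sqrt (t^2 + R^2 - 2*t*R*Real.cos θ) := by
  have h := Real.sin_sq_add_cos_sq θ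
  simp only [nrm2, e2, Real.cos_add, Real.sin_add, Real.cos_pi_div_two, Real.sin_pi_div_two,
    Prod.smul_mk, Prod.mk_sub_mk, smul_eq_mul]
  congr 1
  ring_nf
  nlinarith [h]

lemma nrm2_minus (t R θ : ℝ) :
    nrm2 (((0:ℝ), t) - R • e2 (Real.pi/2 - θ)) = Real.sqrt (t^2 + R^2 - 2*t*R*Real.cos θ) := by
  have h := Real.sin_sq_add_cos_sq θ
  simp only [nrm2, e2, Real.cos_sub, Real.sin_sub, Real.cos_pi_div_two, Real.sin_pi_div_two,
    Prod.smul_mk, Prod.mk_sub_mk, smul_eq_mul]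
  congr 1
  ring_nf
  nlinarith [h]

lemma dot2_calc (T₁ T₂ R₁ R₂ θ : ℝ) :
    dot2 (T₁ • e2 (Real.pi/2 + θ) - T₂ • e2 (Real.pi/2 - θ))
      (R₁ • e2 (Real.pi/2 + θ) - R₂ • e2 (Real.pi/2 - θ))
    = T₁*R₁ + T₂*R₂ - (T₁*R₂ + T₂*R₁) * Real.cos (2*θ) := by
  have h := Real.sin_sq_add_cos_sq θ
  simp only [dot2, e2, Real.cos_add, Real.sin_add, Real.cos_sub, Real.sin_sub,
    Real.cos_pi_div_two, Real.sin_pi_div_two, Real.cos_two_mul,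
    Prod.smul_mk, Prod.mk_sub_mk, smul_eq_mul]
  ring_nf
  linear_combination ((T₁+T₂)*(R₁+R₂)) * h

lemma sig_cont (f : ℝ → ℝ) (hc : ContinuousOn f (Ici 0)) : ContinuousOn (sig f) (Ici 0) :=
  continuousOn_id.mul (hc.comp (continuous_pow 2).continuousOn (fun x _ => sq_nonneg x))

lemma sig_mono_Icc (f : ℝ → ℝ) (hc : ContinuousOn f (Ici 0)) (s0 : ℝ)
    (h : ∀ s ∈ Ico 0 s0, 0 < derivWithin (sig f) (Ici 0) s) :
    StrictMonoOn (sig f) (Icc 0 s0) := by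
  apply strictMonoOn_of_deriv_pos (convex_Icc 0 s0) ((sig_cont f hc).mono Icc_subset_Ici_self)
  intro x hx
  rw [interior_Icc] at hx
  rw [← derivWithin_of_mem_nhds (Ici_mem_nhds hx.1)]
  exact h x ⟨hx.1.le, hx.2⟩

lemma sig_mono_Ici (f : ℝ → ℝ) (hc : ContinuousOn f (Ici 0)) (s2 : ℝ) (hs2 : 0 ≤ s2)
    (h : ∀ s ∈ Ioi s2, 0 < derivWithin (sig f) (Ici 0) s) :
    StrictMonoOn (sig f) (Ici s2) := by
  apply strictMonoOn_of_deriv_pos (convex_Ici s2) ((sig_cont f hc).mono (Ici_subset_Ici.mpr hs2))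
  intro x hx
  rw [interior_Ici] at hx
  rw [← derivWithin_of_mem_nhds (Ici_mem_nhds (lt_of_le_of_lt hs2 hx))]
  exact h x hx

lemma sig_anti_Ici (f : ℝ → ℝ) (hc : ContinuousOn f (Ici 0)) (s0 : ℝ) (hs0 : 0 ≤ s0)
    (h : ∀ s ∈ Ioi s0, derivWithin (sig f) (Ici 0) s < 0) :
    StrictAntiOn (sig f) (Ici s0) := by
  apply strictAntiOn_of_deriv_neg (convex_Ici s0) ((sig_cont f hc).mono (Ici_subset_Ici.mpr hs0))
  intro x hx
  rw [interior_Ici] at hx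
  rw [← derivWithin_of_mem_nhds (Ici_mem_nhds (lt_of_le_of_lt hs0 hx))]
  exact h x hx

lemma core {n : ℕ} (f : ℝ → ℝ) (A : Euc n → Euc n)
    (hA : ∀ p, A p = f (‖p‖ ^ 2) • p)
    (pm pp : Euc n) (horth : rinner (A pp - A pm) (pp - pm) = 0)
    (a b c H : ℝ) (ha : 0 ≤ a) (hb : 0 ≤ b)
    (hfa : sig f a = c) (hfb : sig f b = c)
    (hpm : 0 < ‖pm‖) (hpp : 0 < ‖pp‖)
    (hsel : ∀ θ : ℝ, θ ∈ Icc 0 (Real.pi/2) →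
      dot2 (sig f ‖pm‖ • e2 (Real.pi/2 + θ) - sig f ‖pp‖ • e2 (Real.pi/2 - θ))
        (‖pm‖ • e2 (Real.pi/2 + θ) - ‖pp‖ • e2 (Real.pi/2 - θ)) = 0 →
      θ < Real.pi/2 ∧
      nrm2 (((0:ℝ), a) - ‖pm‖ • e2 (Real.pi/2 + θ)) ≤ H ∧
      nrm2 (((0:ℝ), b) - ‖pp‖ • e2 (Real.pi/2 - θ)) ≤ H ∧
      nrm2 (((0:ℝ), c) - sig f ‖pm‖ • e2 (Real.pi/2 + θ)) ≤ H ∧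
      nrm2 (((0:ℝ), c) - sig f ‖pp‖ • e2 (Real.pi/2 - θ)) ≤ H) :
    ∃ ζ : Euc n, ‖ζ‖ = 1 ∧ A (a • ζ) = c • ζ ∧ A (b • ζ) = c • ζ ∧
      ‖a • ζ - pm‖ ≤ H ∧ ‖b • ζ - pp‖ ≤ H ∧ ‖c • ζ - A pm‖ ≤ H ∧ ‖c • ζ - A pp‖ ≤ H := by
  have hR₁0 : ‖pm‖ ≠ 0 := ne_of_gt hpm
  have hR₂0 : ‖pp‖ ≠ 0 := ne_of_gt hpp
  have hiple : |(inner ℝ pm pp : ℝ)| ≤ ‖pm‖ * ‖pp‖ := abs_real_inner_le_norm pm pp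
  have hRR : 0 < ‖pm‖ * ‖pp‖ := mul_pos hpm hpp
  have hc2 : |(inner ℝ pm pp : ℝ) / (‖pm‖ * ‖pp‖)| ≤ 1 := by
    rw [abs_div, abs_of_pos hRR]
    exact div_le_one_of_le₀ hiple hRR.le
  obtain ⟨hc2l, hc2u⟩ := abs_le.mp hc2
  set θ : ℝ := Real.arccos ((inner ℝ pm pp : ℝ) / (‖pm‖ * ‖pp‖)) / 2 with hθdef
  have hθ1 : 0 ≤ θ := by
    have := Real.arccos_nonneg ((inner ℝ pm pp : ℝ) / (‖pm‖ * ‖pp‖)); rw [hθdef]; linarith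
  have hθ2 : θ ≤ Real.pi / 2 := by
    have := Real.arccos_le_pi ((inner ℝ pm pp : ℝ) / (‖pm‖ * ‖pp‖)); rw [hθdef]; linarith
  have hcos2 : Real.cos (2 * θ) = (inner ℝ pm pp : ℝ) / (‖pm‖ * ‖pp‖) := by
    rw [hθdef, show 2 * (Real.arccos ((inner ℝ pm pp : ℝ) / (‖pm‖ * ‖pp‖)) / 2)
      = Real.arccos ((inner ℝ pm pp : ℝ) / (‖pm‖ * ‖pp‖)) by ring]
    exact Real.cos_arccos hc2l hc2u
  have hip : (inner ℝ pm pp : ℝ) = ‖pm‖ * ‖pp‖ * Real.cos (2 * θ) := by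
    rw [hcos2]; field_simp
  have hexp : rinner (A pp - A pm) (pp - pm)
      = f (‖pp‖^2) * ‖pp‖^2 + f (‖pm‖^2) * ‖pm‖^2
        - (f (‖pm‖^2) + f (‖pp‖^2)) * (inner ℝ pm pp : ℝ) := by
    rw [hA, hA]
    simp only [rinner, inner_sub_left, inner_sub_right, real_inner_smul_left,
      real_inner_self_eq_norm_sq, real_inner_comm pm pp]
    ring
  have horth' : f (‖pp‖^2) * ‖pp‖^2 + f (‖pm‖^2) * ‖pm‖^2
      - (f (‖pm‖^2) + f (‖pp‖^2)) * (inner ℝ pm pp : ℝ) = 0 := by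
    rw [← hexp]; exact horth
  have hdot : dot2 (sig f ‖pm‖ • e2 (Real.pi/2 + θ) - sig f ‖pp‖ • e2 (Real.pi/2 - θ))
      (‖pm‖ • e2 (Real.pi/2 + θ) - ‖pp‖ • e2 (Real.pi/2 - θ)) = 0 := by
    rw [dot2_calc]
    simp only [sig]
    linear_combination horth' + (f (‖pm‖^2) + f (‖pp‖^2)) * hip
  obtain ⟨hθlt, B1, B2, B3, B4⟩ := hsel θ ⟨hθ1, hθ2⟩ hdot
  have hpi : 0 < Real.pi := Real.pi_pos
  have hco : 0 < Real.cos θ := Real.cos_pos_of_mem_Ioo ⟨by linarith, hθlt⟩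
  have hco0 : Real.cos θ ≠ 0 := ne_of_gt hco
  have hip2 : (inner ℝ pm pp : ℝ) = ‖pm‖ * ‖pp‖ * (2 * Real.cos θ ^ 2 - 1) := by
    rw [hip, Real.cos_two_mul]
  set ζ : Euc n := ((2 * Real.cos θ)⁻¹ * ‖pm‖⁻¹) • pm + ((2 * Real.cos θ)⁻¹ * ‖pp‖⁻¹) • pp
    with hζdef
  have hζpm : (inner ℝ ζ pm : ℝ) = ‖pm‖ * Real.cos θ := by
    rw [hζdef]
    simp only [inner_add_left, real_inner_smul_left]
    rw [real_inner_self_eq_norm_sq, real_inner_comm pm pp, hip2]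
    field_simp; ring
  have hζpp : (inner ℝ ζ pp : ℝ) = ‖pp‖ * Real.cos θ := by
    rw [hζdef]
    simp only [inner_add_left, real_inner_smul_left]
    rw [real_inner_self_eq_norm_sq, hip2]
    field_simp; ring
  have hζζ : (inner ℝ ζ ζ : ℝ) = 1 := by
    rw [hζdef]
    simp only [inner_add_left, inner_add_right, real_inner_smul_left, real_inner_smul_right]
    rw [real_inner_self_eq_norm_sq pm, real_inner_self_eq_norm_sq pp,
      real_inner_comm pm pp, hip2]
    field_simp; ring
  have hζ : ‖ζ‖ = 1 := by
    have h2 : ‖ζ‖ ^ 2 = 1 := by rw [← real_inner_self_eq_norm_sq]; exact hζζ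
    rw [← Real.sqrt_sq (norm_nonneg ζ), h2, Real.sqrt_one]
  have hAt : ∀ t : ℝ, 0 ≤ t → A (t • ζ) = sig f t • ζ := by
    intro t ht
    rw [hA, norm_smul, hζ, mul_one, Real.norm_eq_abs, abs_of_nonneg ht, smul_smul, sig, mul_comm]
  have key : ∀ (t T : ℝ) (v : Euc n), (inner ℝ ζ v : ℝ) = T * Real.cos θ → ‖v‖ ^ 2 = T ^ 2 →
      ‖t • ζ - v‖ = Real.sqrt (t^2 + T^2 - 2*t*T*Real.cos θ) := by
    intro t T v h1 h2
    rw [← Real.sqrt_sq (norm_nonneg (t • ζ - v))]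
    congr 1
    rw [norm_sub_sq_real, norm_smul, hζ, mul_one, real_inner_smul_left, h1, h2,
      Real.norm_eq_abs, sq_abs]
    ring
  have hζApm : (inner ℝ ζ (A pm) : ℝ) = sig f ‖pm‖ * Real.cos θ := by
    rw [hA, real_inner_smul_right, hζpm, sig]; ring
  have hζApp : (inner ℝ ζ (A pp) : ℝ) = sig f ‖pp‖ * Real.cos θ := by
    rw [hA, real_inner_smul_right, hζpp, sig]; ring
  have hnApm : ‖A pm‖ ^ 2 = (sig f ‖pm‖) ^ 2 := by
    rw [hA, norm_smul, Real.norm_eq_abs, mul_pow, sq_abs, sig]; ring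
  have hnApp : ‖A pp‖ ^ 2 = (sig f ‖pp‖) ^ 2 := by
    rw [hA, norm_smul, Real.norm_eq_abs, mul_pow, sq_abs, sig]; ring
  refine ⟨ζ, hζ, by rw [hAt a ha, hfa], by rw [hAt b hb, hfb], ?_, ?_, ?_, ?_⟩
  · rw [key a ‖pm‖ pm hζpm rfl, ← nrm2_plus]; exact B1
  · rw [key b ‖pp‖ pp hζpp rfl, ← nrm2_minus]; exact B2
  · rw [key c (sig f ‖pm‖) (A pm) hζApm hnApm, ← nrm2_plus]; exact B3
  · rw [key c (sig f ‖pp‖) (A pp) hζApp hnApp, ← nrm2_minus]; exact B4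

end Stmt17Aux

/-- Theorem 5.5 (selection of approximate collinear rank-one connections for
`R(F₀)`), Cases I and II. -/
theorem stmt_17 (n : ℕ) (f : ℝ → ℝ) (A : Euc n → Euc n)
    (hA : ∀ p, A p = f (‖p‖ ^ 2) • p) (sm sp : ℝ → ℝ) (r₁ r₂ : ℝ)
    (pm pp : Euc n) (h : ℝ × ℝ × ℝ → ℝ)
    (horth : rinner (A pp - A pm) (pp - pm) = 0) :
    (∀ s₀ : ℝ, HypPM f s₀ → PMroots f s₀ sm sp →
      0 < r₁ → r₁ < r₂ → r₂ < sig f s₀ →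
      sm r₁ < ‖pm‖ → ‖pm‖ < sm r₂ → sm r₂ < sp r₂ →
      sp r₂ < ‖pp‖ → ‖pp‖ < sp r₁ →
      SelBoundI (sm r₂) (sp r₂) r₂ h →
      ∃ ζ : Euc n, ‖ζ‖ = 1 ∧
        A (sm r₂ • ζ) = r₂ • ζ ∧ A (sp r₂ • ζ) = r₂ • ζ ∧
        ‖sm r₂ • ζ - pm‖ ≤ h (sm r₂ - sm r₁, sp r₁ - sp r₂, r₂ - r₁) ∧
        ‖sp r₂ • ζ - pp‖ ≤ h (sm r₂ - sm r₁, sp r₁ - sp r₂, r₂ - r₁) ∧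
        ‖r₂ • ζ - A pm‖ ≤ h (sm r₂ - sm r₁, sp r₁ - sp r₂, r₂ - r₁) ∧
        ‖r₂ • ζ - A pp‖ ≤ h (sm r₂ - sm r₁, sp r₁ - sp r₂, r₂ - r₁)) ∧
    (∀ a s₁ s₂ s1s s2s : ℝ, HypH a f s₁ s₂ → Hroots f s₁ s₂ s1s s2s sm sp →
      sig f s₂ < r₁ → r₁ < r₂ → r₂ < sig f s₁ →
      sm r₁ < ‖pm‖ → ‖pm‖ < sm r₂ → sm r₂ < sp r₁ →
      sp r₁ < ‖pp‖ → ‖pp‖ < sp r₂ →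
      SelBoundII (sm r₂) (sp r₂) r₂ h →
      ∃ ζ : Euc n, ‖ζ‖ = 1 ∧
        A (sm r₂ • ζ) = r₂ • ζ ∧ A (sp r₂ • ζ) = r₂ • ζ ∧
        ‖sm r₂ • ζ - pm‖ ≤ h (sm r₂ - sm r₁, sp r₂ - sp r₁, r₂ - r₁) ∧
        ‖sp r₂ • ζ - pp‖ ≤ h (sm r₂ - sm r₁, sp r₂ - sp r₁, r₂ - r₁) ∧
        ‖r₂ • ζ - A pm‖ ≤ h (sm r₂ - sm r₁, sp r₂ - sp r₁, r₂ - r₁) ∧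
        ‖r₂ • ζ - A pp‖ ≤ h (sm r₂ - sm r₁, sp r₂ - sp r₁, r₂ - r₁)) := by
  constructor
  · -- Case I
    intro s₀ hPM hroots hr1 hr12 hr2 h1 h2 h3 h4 h5 HSB
    obtain ⟨hm1mem, hm1eq, hp1mem, hp1eq⟩ := hroots r₁ ⟨hr1, lt_trans hr12 hr2⟩
    obtain ⟨hm2mem, hm2eq, hp2mem, hp2eq⟩ := hroots r₂ ⟨lt_trans hr1 hr12, hr2⟩
    have hs₀ : 0 < s₀ := hPM.hs₀
    have M := sig_mono_Icc f hPM.cont s₀ hPM.inc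
    have N := sig_anti_Ici f hPM.cont s₀ hs₀.le hPM.dec
    have hm1a : 0 < sm r₁ := hm1mem.1
    have hm1b : sm r₁ < s₀ := hm1mem.2
    have hm2a : 0 < sm r₂ := hm2mem.1
    have hm2b : sm r₂ < s₀ := hm2mem.2
    have hp1a : s₀ < sp r₁ := hp1mem
    have hp2a : s₀ < sp r₂ := hp2mem
    have hpm0 : 0 < ‖pm‖ := lt_trans hm1a h1
    have hpp0 : 0 < ‖pp‖ := lt_trans (lt_trans hs₀ hp2a) h4
    have hT1l : r₁ < sig f ‖pm‖ := by
      have := M ⟨hm1a.le, hm1b.le⟩ ⟨(norm_nonneg pm), by linarith⟩ h1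
      rw [hm1eq] at this; exact this
    have hT1u : sig f ‖pm‖ < r₂ := by
      have := M ⟨norm_nonneg pm, by linarith⟩ ⟨hm2a.le, hm2b.le⟩ h2
      rw [hm2eq] at this; exact this
    have hT2l : r₁ < sig f ‖pp‖ := by
      have := N (by exact (le_of_lt (lt_trans hp2a h4))) (le_of_lt hp1a) h5
      rw [hp1eq] at this; exact this
    have hT2u : sig f ‖pp‖ < r₂ := by
      have := N (le_of_lt hp2a) (le_of_lt (lt_trans hp2a h4)) h4
      rw [hp2eq] at this; exact this
    refine core f A hA pm pp horth (sm r₂) (sp r₂) r₂ _ hm2a.le (by linarith) hm2eq hp2eq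
      hpm0 hpp0 ?_
    intro θ hθ hdot
    have hπ : 0 < Real.pi := Real.pi_pos
    obtain ⟨o1, o2, o3, b1, b2, b3, b4⟩ := HSB (sm r₂ - sm r₁) (sp r₁ - sp r₂) (r₂ - r₁)
      ‖pm‖ ‖pp‖ (sig f ‖pm‖) (sig f ‖pp‖) θ
      (by linarith) (by linarith) (by linarith) (by linarith) (by linarith)
      ⟨by linarith, by linarith⟩ ⟨by linarith, by linarith⟩
      ⟨by linarith, by linarith⟩ ⟨by linarith, by linarith⟩
      ⟨by linarith [hθ.1], hθ.2⟩ hdot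
    exact ⟨o2, b1, b2, b3, b4⟩
  · -- Case II
    intro α s₁ s₂ s1s s2s hH hroots hr1 hr12 hr2 h1 h2 h3 h4 h5 HSB
    obtain ⟨h1smem, h1seq, h2smem, h2seq, hr⟩ := hroots
    obtain ⟨hm1mem, hm1eq, hp1mem, hp1eq⟩ := hr r₁ ⟨hr1, lt_trans hr12 hr2⟩
    obtain ⟨hm2mem, hm2eq, hp2mem, hp2eq⟩ := hr r₂ ⟨lt_trans hr1 hr12, hr2⟩
    have hs₁ : 0 < s₁ := hH.hs₁
    have hs₁₂ : s₁ < s₂ := hH.hs₁₂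
    have h1sa : 0 ≤ s1s := h1smem.1
    have h2sa : s₂ < s2s := h2smem
    have M := sig_mono_Icc f hH.cont s₁ hH.inclo
    have N := sig_mono_Ici f hH.cont s₂ (by linarith) hH.inchi
    have hm1a : s1s < sm r₁ := hm1mem.1
    have hm1b : sm r₁ < s₁ := hm1mem.2
    have hm2a : s1s < sm r₂ := hm2mem.1
    have hm2b : sm r₂ < s₁ := hm2mem.2
    have hp1a : s₂ < sp r₁ := hp1mem.1
    have hp2a : s₂ < sp r₂ := hp2mem.1
    have hr1pos : 0 < r₁ := lt_of_le_of_lt hH.nonneg hr1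
    have hpm0 : 0 < ‖pm‖ := by linarith
    have hpp0 : 0 < ‖pp‖ := by linarith
    have hT1l : r₁ < sig f ‖pm‖ := by
      have := M ⟨by linarith, by linarith⟩ ⟨(norm_nonneg pm), by linarith⟩ h1
      rw [hm1eq] at this; exact this
    have hT1u : sig f ‖pm‖ < r₂ := by
      have := M ⟨norm_nonneg pm, by linarith⟩ ⟨by linarith, by linarith⟩ h2
      rw [hm2eq] at this; exact this
    have hT2l : r₁ < sig f ‖pp‖ := by
      have := N (le_of_lt hp1a) (by simp only [mem_Ici]; linarith) h4
      rw [hp1eq] at this; exact this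
    have hT2u : sig f ‖pp‖ < r₂ := by
      have := N (by simp only [mem_Ici]; linarith) (le_of_lt hp2a) h5
      rw [hp2eq] at this; exact this
    refine core f A hA pm pp horth (sm r₂) (sp r₂) r₂ _ (by linarith) (by linarith)
      hm2eq hp2eq hpm0 hpp0 ?_
    intro θ hθ hdot
    have hπ : 0 < Real.pi := Real.pi_pos
    obtain ⟨o1, o2, o3, b1, b2, b3, b4⟩ := HSB (sm r₂ - sm r₁) (sp r₂ - sp r₁) (r₂ - r₁)
      ‖pm‖ ‖pp‖ (sig f ‖pm‖) (sig f ‖pp‖) θ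
      (by linarith) (by linarith) (by linarith) (by linarith) (by linarith) (by linarith)
      ⟨by linarith, by linarith⟩ ⟨by linarith, by linarith⟩
      ⟨by linarith, by linarith⟩ ⟨by linarith, by linarith⟩
      ⟨by linarith [hθ.1], hθ.2⟩ hdot
    exact ⟨o2, b1, b2, b3, b4⟩
end
end
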